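/- The power series ∑_{n≥0} b_n z^n with b₀ = φ, b₁ = 1, b_n = (∑_{k=1}^{n-1} C(n,k) b_k b_{n-k}) / ((2φ)^n - 2φ) for n ≥ 2 has infinite radius of convergence, hence defines an entire function f. -/

import Mathlib

/-!
By strong induction, `|b n| ≤ 1 / √n!` for `n ≥ 1`. Indeed `n! ≤ 2ⁿ k! (n-k)!` bounds the
`k`-th term of the numerator by `C(n,k) √2ⁿ / √n!`, the weights `C(n,k)` with `0 < k < n` add
up to `2ⁿ - 2`, and `(2ⁿ - 2) √2ⁿ ≤ (2√2)ⁿ - 2√2 ≤ (2φ)ⁿ - 2φ` because `x ↦ xⁿ - x` increases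
on `[1, ∞)` and `√2 ≤ φ`. Since `rⁿ / √n!` is summable for every `r`, the radius is infinite.
-/

open Finset

section
open Nat

lemma sum_Ico_one_choose {n : ℕ} (hn : 1 ≤ n) :
    ∑ k ∈ Ico 1 n, (n.choose k : ℝ) = 2 ^ n - 2 := by
  have h : ∑ k ∈ range (n + 1), (n.choose k : ℝ) = 2 ^ n := by
    exact_mod_cast Nat.sum_range_choose n
  rw [range_eq_Ico, sum_eq_sum_Ico_succ_bot (by omega), sum_Ico_succ_top (by omega),
    Nat.choose_zero_right, Nat.choose_self] at h
  push_cast at h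
  linarith

lemma sqrt_two_pow (n : ℕ) : √((2 : ℝ) ^ n) = √2 ^ n := by
  rw [Real.sqrt_eq_iff_eq_sq (by positivity) (by positivity), ← pow_mul, mul_comm, pow_mul,
    Real.sq_sqrt zero_le_two]

lemma sqrt_factorial_le_sqrt_two_pow_mul {n k : ℕ} (hk : k ≤ n) :
    √(n ! : ℝ) ≤ √2 ^ n * (√(k ! : ℝ) * √((n - k)! : ℝ)) := by
  have hfac : (n ! : ℝ) ≤ 2 ^ n * (k ! * (n - k)!) := by
    rw [← Nat.choose_mul_factorial_mul_factorial hk, mul_assoc]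
    push_cast
    gcongr
    exact_mod_cast Nat.choose_le_two_pow n k
  calc √(n ! : ℝ) ≤ √(2 ^ n * (k ! * (n - k)!)) := Real.sqrt_le_sqrt hfac
    _ = _ := by rw [Real.sqrt_mul (by positivity), Real.sqrt_mul (by positivity), sqrt_two_pow]

lemma pow_sub_self_le_pow_sub_self {x y : ℝ} (hx : 1 ≤ x) (hxy : x ≤ y) {n : ℕ} (hn : 1 ≤ n) :
    x ^ n - x ≤ y ^ n - y := by
  obtain ⟨m, rfl⟩ := Nat.exists_eq_add_of_le hn
  have key : x * (x ^ m - 1) ≤ y * (y ^ m - 1) :=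
    mul_le_mul hxy (by gcongr) (sub_nonneg.2 (one_le_pow₀ hx)) (by linarith)
  linear_combination key

lemma two_pow_sub_two_mul_sqrt_two_pow_le {c : ℝ} (hc : 2 * √2 ≤ c) {n : ℕ} (hn : 1 ≤ n) :
    (2 ^ n - 2) * √2 ^ n ≤ c ^ n - c := by
  have h2 : 1 ≤ √2 := Real.one_le_sqrt.2 one_le_two
  calc (2 ^ n - 2) * √2 ^ n = (2 * √2) ^ n - 2 * √2 ^ n := by ring
    _ ≤ (2 * √2) ^ n - 2 * √2 := by linarith [le_self_pow₀ h2 (by omega : n ≠ 0)]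
    _ ≤ c ^ n - c := pow_sub_self_le_pow_sub_self (by linarith) hc hn

lemma abs_le_inv_sqrt_factorial_of_rec {c : ℝ} (hc : 2 * √2 ≤ c) {b : ℕ → ℝ} (h1 : |b 1| ≤ 1)
    (hrec : ∀ n ≥ 2, b n =
      (∑ k ∈ Ico 1 n, (n.choose k : ℝ) * b k * b (n - k)) / (c ^ n - c)) :
    ∀ n ≥ 1, |b n| ≤ (√(n ! : ℝ))⁻¹ := by
  intro n hn
  induction n using Nat.strong_induction_on with
  | _ n ih =>
  obtain rfl | hn2 : n = 1 ∨ 2 ≤ n := by omega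
  · simpa using h1
  have hsqrt : 0 < √(n ! : ℝ) := Real.sqrt_pos.2 (by positivity)
  have hterm : ∀ k ∈ Ico 1 n,
      |(n.choose k : ℝ) * b k * b (n - k)| ≤ n.choose k * (√2 ^ n / √(n ! : ℝ)) := by
    intro k hk
    obtain ⟨hk1, hkn⟩ := mem_Ico.1 hk
    have hprod : |b k| * |b (n - k)| ≤ (√(k ! : ℝ) * √((n - k)! : ℝ))⁻¹ := by
      rw [mul_inv]
      exact mul_le_mul (ih k hkn hk1) (ih (n - k) (by omega) (by omega)) (abs_nonneg _)
        (by positivity)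
    have hfac : (√(k ! : ℝ) * √((n - k)! : ℝ))⁻¹ ≤ √2 ^ n / √(n ! : ℝ) := by
      rw [inv_eq_one_div, div_le_div_iff₀ (by positivity) hsqrt, one_mul]
      exact sqrt_factorial_le_sqrt_two_pow_mul hkn.le
    rw [abs_mul, abs_mul, Nat.abs_cast, mul_assoc]
    gcongr
    exact hprod.trans hfac
  have hden : 0 < c ^ n - c := by
    have h4 : (2 : ℝ) ^ 2 ≤ 2 ^ n := pow_le_pow_right₀ one_le_two hn2
    refine lt_of_lt_of_le (mul_pos ?_ (by positivity)) (two_pow_sub_two_mul_sqrt_two_pow_le hc hn)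
    linarith
  rw [hrec n hn2, abs_div, abs_of_pos hden, div_le_iff₀ hden]
  calc |∑ k ∈ Ico 1 n, (n.choose k : ℝ) * b k * b (n - k)|
      ≤ ∑ k ∈ Ico 1 n, (n.choose k : ℝ) * (√2 ^ n / √(n ! : ℝ)) :=
        (abs_sum_le_sum_abs _ _).trans (sum_le_sum hterm)
    _ = (2 ^ n - 2) * √2 ^ n / √(n ! : ℝ) := by
        rw [← sum_mul, sum_Ico_one_choose hn, mul_div_assoc]
    _ ≤ (c ^ n - c) / √(n ! : ℝ) := by
        gcongr; exact two_pow_sub_two_mul_sqrt_two_pow_le hc hn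
    _ = (√(n ! : ℝ))⁻¹ * (c ^ n - c) := by ring

lemma summable_pow_div_sqrt_factorial (x : ℝ) : Summable fun n ↦ x ^ n / √(n ! : ℝ) := by
  have hsum : Summable fun n : ℕ ↦ (((2 * |x|) ^ 2) ^ n / n ! + ((1 / 2 : ℝ) ^ 2) ^ n) / 2 :=
    ((Real.summable_pow_div_factorial _).add
      (summable_geometric_of_lt_one (by norm_num) (by norm_num))).div_const 2
  refine Summable.of_norm_bounded hsum fun n ↦ ?_
  have hsqrt : 0 < √(n ! : ℝ) := Real.sqrt_pos.2 (by positivity)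
  set a := (2 * |x|) ^ n / √(n ! : ℝ)
  set b := (1 / 2 : ℝ) ^ n
  have hab : |x| ^ n / √(n ! : ℝ) = a * b := by
    simp only [a, b]; rw [div_mul_eq_mul_div, ← mul_pow]; congr 2; ring
  have ha : a ^ 2 = ((2 * |x|) ^ 2) ^ n / n ! := by
    rw [div_pow, Real.sq_sqrt (by positivity), ← pow_mul, ← pow_mul, mul_comm n 2]
  have hb : b ^ 2 = ((1 / 2 : ℝ) ^ 2) ^ n := by rw [← pow_mul, ← pow_mul, mul_comm n 2]
  rw [Real.norm_eq_abs, abs_div, abs_pow, abs_of_pos hsqrt, hab, ← ha, ← hb]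
  linarith [two_mul_le_add_sq a b]

end

lemma exists_differentiable_hasSum_of_summable {𝕜 : Type*} [NontriviallyNormedField 𝕜]
    [CompleteSpace 𝕜] {a : ℕ → 𝕜}
    (ha : ∀ r : NNReal, Summable fun n ↦ ‖a n‖ * r ^ n) :
    ∃ f : 𝕜 → 𝕜, Differentiable 𝕜 f ∧ ∀ z, HasSum (fun n ↦ a n * z ^ n) (f z) := by
  set p := FormalMultilinearSeries.ofScalars 𝕜 a
  have hp : p.radius = ⊤ :=
    p.radius_eq_top_of_summable_norm fun r ↦ by
      simpa only [p, FormalMultilinearSeries.ofScalars_norm] using ha r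
  have hball (z : 𝕜) : z ∈ Metric.eball (0 : 𝕜) p.radius := by simp [hp]
  refine ⟨p.sum, fun z ↦ (p.analyticOnNhd z (hball z)).differentiableAt, fun z ↦ ?_⟩
  simpa [p, FormalMultilinearSeries.ofScalars_apply_eq, mul_comm] using p.hasSum (hball z)

theorem power_series_entire_general (φ : ℝ) (hφ : φ = (1 + Real.sqrt 5) / 2)
    (b : ℕ → ℝ) (h1 : b 1 = 1)
    (hrec : ∀ n ≥ 2, b n =
      (∑ k ∈ Finset.Ico 1 n, (n.choose k : ℝ) * b k * b (n - k)) /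
      ((2 * φ) ^ n - 2 * φ)) :
    ∃ f : ℂ → ℂ, Differentiable ℂ f ∧
      ∀ z : ℂ, HasSum (fun n => (b n : ℂ) * z ^ n) (f z) := by
  have hφ2 : 2 * √2 ≤ 2 * φ := by
    have h2 : √2 ≤ 3 / 2 := Real.sqrt_le_iff.2 ⟨by norm_num, by norm_num⟩
    have h5 : 2 ≤ √5 := Real.le_sqrt_of_sq_le (by norm_num)
    rw [hφ]; linarith
  have hdecay := abs_le_inv_sqrt_factorial_of_rec hφ2 (by simp [h1]) hrec
  refine exists_differentiable_hasSum_of_summable fun r ↦ ?_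
  refine (summable_pow_div_sqrt_factorial (r : ℝ)).of_norm_bounded_eventually ?_
  filter_upwards [Filter.eventually_cofinite_ne 0] with n hn
  rw [Complex.norm_real, norm_mul, norm_norm, Real.norm_eq_abs, norm_pow, NNReal.norm_eq,
    div_eq_inv_mul]
  exact mul_le_mul_of_nonneg_right (hdecay n (Nat.one_le_iff_ne_zero.2 hn)) (by positivity)

theorem power_series_entire (φ : ℝ) (hφ : φ = (1 + Real.sqrt 5) / 2)
    (b : ℕ → ℝ) (h0 : b 0 = φ) (h1 : b 1 = 1)
    (hrec : ∀ n ≥ 2, b n =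
      (∑ k ∈ Finset.Ico 1 n, (n.choose k : ℝ) * b k * b (n - k)) /
      ((2 * φ) ^ n - 2 * φ)) :
    ∃ f : ℂ → ℂ, Differentiable ℂ f ∧
      ∀ z : ℂ, HasSum (fun n => (b n : ℂ) * z ^ n) (f z) :=
  power_series_entire_general φ hφ b h1 hrec
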